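/- Let G be a finite connected discrete graph without loops and without 1-valent vertices, let Γ be its associated metric graph, let B be a maximal chain of bridge edges in Γ with endpoints v_1 and v_2, and let T be a spanning tree of Γ. Let D be an effective divisor on Γ equivalent to 2K_G such that (1) the support of D contains a point from the relative interior of each edge contained in the complement of T, and (2) D ≥ K_G − (v_1) − (v_2). If f is a tropical rational function on Γ with div(f) = D − 2K_G, then the locus of points of Γ where f achieves its minimum value is equal to B. -/

import Mathlib

open scoped Classical

noncomputable section

/-- A finite connected-type datum: a finite discrete (multi)graph without
loops together with a positive length attached to each edge; this is the
combinatorial model of a metric graph `Γ` (the geometric realization of the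
graph in which the edge `e` is an interval of length `len e`). -/
structure LooplessMetricGraph where
  /-- the vertices -/
  V : Type
  /-- the edges (multiple edges between two vertices are allowed) -/
  E : Type
  [fintypeV : Fintype V]
  [fintypeE : Fintype E]
  nonemptyV : Nonempty V
  src : E → V
  dst : E → V
  /-- the graph has no loops -/
  no_loops : ∀ e, src e ≠ dst e
  /-- the length of each edge of the metric graph -/
  len : E → ℝ
  len_pos : ∀ e, 0 < len e

attribute [instance] LooplessMetricGraph.fintypeV LooplessMetricGraph.fintypeE

namespace LooplessMetricGraph

variable (G : LooplessMetricGraph)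

/-- The points of the metric graph `Γ`: a vertex, or an interior point of an
edge `e` at arclength distance `t ∈ (0, len e)` from its source. -/
abbrev Point : Type := G.V ⊕ (Σ e : G.E, {t : ℝ // 0 < t ∧ t < G.len e})

/-- Two vertices are joined by an edge belonging to the edge set `S`. -/
def Step (S : Set G.E) (v w : G.V) : Prop :=
  ∃ e ∈ S, (G.src e = v ∧ G.dst e = w) ∨ (G.src e = w ∧ G.dst e = v)

/-- The vertices `v` and `w` are joined by a path of edges in `S`. -/
def Reaches (S : Set G.E) (v w : G.V) : Prop :=
  Relation.ReflTransGen (G.Step S) v w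

/-- The edge set `S` connects all vertices of the graph. -/
def SpanningConnected (S : Set G.E) : Prop := ∀ v w, G.Reaches S v w

/-- The graph is connected. -/
def Connected : Prop := G.SpanningConnected Set.univ

/-- `T` is a spanning tree: its edges connect all the vertices, and removing
any one of them destroys this property. -/
def IsSpanningTree (T : Set G.E) : Prop :=
  G.SpanningConnected T ∧ ∀ e ∈ T, ¬ G.SpanningConnected (T \ {e})

/-- An edge is a bridge if it is not contained in any non-trivial cycle,
equivalently (for a connected graph) if its removal disconnects the graph. -/
def IsBridge (e : G.E) : Prop := ¬ G.SpanningConnected (Set.univ \ {e})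

/-- The set of points of `Γ` lying on the closed edge `e`. -/
def onEdge (e : G.E) : Set G.Point :=
  {p | p = Sum.inl (G.src e) ∨ p = Sum.inl (G.dst e) ∨
    ∃ t, p = Sum.inr ⟨e, t⟩}

/-- For a spanning tree `T` and an edge `e ∉ T`, the unique cycle `Z(T, e)`
in `T ∪ {e}`, as a set of points of `Γ`: the union of the closed edges of
`T ∪ {e}` whose removal does not disconnect `T ∪ {e}`. -/
def cycleSet (T : Set G.E) (e : G.E) : Set G.Point :=
  ⋃ e' ∈ {e' ∈ T ∪ {e} | G.SpanningConnected ((T ∪ {e}) \ {e'})}, G.onEdge e'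

/-- The valency of a vertex. -/
def valAt (v : G.V) : ℕ :=
  (Finset.univ.filter fun e => G.src e = v).card +
    (Finset.univ.filter fun e => G.dst e = v).card

/-- The canonical divisor `K_G = Σ_v (val(v) − 2)·v` of the graph, as a
function on the points of `Γ` supported on the vertices. -/
def canonical : G.Point → ℤ :=
  fun p => match p with
    | Sum.inl v => (G.valAt v : ℤ) - 2
    | Sum.inr _ => 0

/-- The restriction of a function on `Γ` to the closed edge `e`, as a
function of the arclength parameter `t ∈ [0, len e]` (junk values outside
this interval). -/
def edgeFun (f : G.Point → ℝ) (e : G.E) : ℝ → ℝ := fun t =>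
  if h : 0 < t ∧ t < G.len e then f (Sum.inr ⟨e, t, h⟩)
  else if t ≤ 0 then f (Sum.inl (G.src e)) else f (Sum.inl (G.dst e))

end LooplessMetricGraph

/-- `g` is piecewise affine with integer slopes on the interval `[a, b]`. -/
def PwIntAffineOn (g : ℝ → ℝ) (a b : ℝ) : Prop :=
  ∃ (n : ℕ) (t : Fin (n + 1) → ℝ) (s : Fin n → ℤ) (c : Fin n → ℝ),
    t 0 = a ∧ t (Fin.last n) = b ∧ Monotone t ∧
    ∀ i : Fin n, ∀ x ∈ Set.Icc (t i.castSucc) (t i.succ),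
      g x = (s i : ℝ) * x + c i

/-- `g` has outgoing slope `s` at `t` in the increasing direction. -/
def HasRightSlope (g : ℝ → ℝ) (t s : ℝ) : Prop :=
  Filter.Tendsto (fun h : ℝ => (g (t + h) - g t) / h)
    (nhdsWithin 0 (Set.Ioi 0)) (nhds s)

/-- `g` has outgoing slope `s` at `t` in the decreasing direction. -/
def HasLeftSlope (g : ℝ → ℝ) (t s : ℝ) : Prop :=
  Filter.Tendsto (fun h : ℝ => (g (t - h) - g t) / h)
    (nhdsWithin 0 (Set.Ioi 0)) (nhds s)

namespace LooplessMetricGraph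

variable (G : LooplessMetricGraph)

/-- `f` is a tropical rational function on `Γ`: a continuous piecewise affine
real-valued function with integer slopes. -/
def IsTropicalRational (f : G.Point → ℝ) : Prop :=
  ∀ e : G.E, PwIntAffineOn (G.edgeFun f e) 0 (G.len e)

/-- The sum of the outgoing slopes of `f` at the point `p` of `Γ` equals `c`. -/
def OutSlopeSum (f : G.Point → ℝ) (p : G.Point) (c : ℝ) : Prop :=
  match p with
  | Sum.inl v => ∃ sOut sIn : G.E → ℝ,
      (∀ e, G.src e = v → HasRightSlope (G.edgeFun f e) 0 (sOut e)) ∧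
      (∀ e, G.dst e = v → HasLeftSlope (G.edgeFun f e) (G.len e) (sIn e)) ∧
      (∑ e ∈ Finset.univ.filter fun e => G.src e = v, sOut e) +
        (∑ e ∈ Finset.univ.filter fun e => G.dst e = v, sIn e) = c
  | Sum.inr q => ∃ sr sl : ℝ,
      HasRightSlope (G.edgeFun f q.1) q.2.1 sr ∧
      HasLeftSlope (G.edgeFun f q.1) q.2.1 sl ∧ sr + sl = c

/-- `div(f) = D`: `f` is a tropical rational function on `Γ` and, at every
point `p` of `Γ`, the sum of the incoming slopes of `f` (that is, minus the
sum of the outgoing slopes) equals `D p`. -/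
def HasDivisor (f : G.Point → ℝ) (D : G.Point → ℤ) : Prop :=
  G.IsTropicalRational f ∧ ∀ p, G.OutSlopeSum f p (-(D p : ℝ))

end LooplessMetricGraph


/-- A chain of bridge edges in the metric graph: a path with successive
distinct vertices `w₀, …, w_n` and edges `b₁, …, b_n`, all of which are
bridges. -/
structure LooplessMetricGraph.BridgeChain (G : LooplessMetricGraph) where
  n : ℕ
  n_pos : 0 < n
  w : Fin (n + 1) → G.V
  w_inj : Function.Injective w
  b : Fin n → G.E
  b_inj : Function.Injective b
  joins : ∀ i : Fin n,
    (G.src (b i) = w i.castSucc ∧ G.dst (b i) = w i.succ) ∨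
      (G.src (b i) = w i.succ ∧ G.dst (b i) = w i.castSucc)
  bridges : ∀ i, G.IsBridge (b i)

namespace LooplessMetricGraph

variable {G : LooplessMetricGraph}

/-- A chain of bridges is maximal if it cannot be extended: every bridge
adjacent to one of its two endpoints already belongs to the chain. -/
def BridgeChain.IsMaximal (B : G.BridgeChain) : Prop :=
  ∀ e : G.E, G.IsBridge e →
    (G.src e = B.w 0 ∨ G.dst e = B.w 0 ∨
      G.src e = B.w (Fin.last B.n) ∨ G.dst e = B.w (Fin.last B.n)) →
    e ∈ Set.range B.b

/-- The set of points of `Γ` lying on (the closed edges of) the chain. -/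
def BridgeChain.points (B : G.BridgeChain) : Set G.Point :=
  ⋃ i : Fin B.n, G.onEdge (B.b i)

end LooplessMetricGraph

/-!
Since `D` is effective, at interior points of edges the outgoing slopes of `f` have nonpositive
sum, so if the minimum `μ` of `f` is attained inside an edge then `f ≡ μ` on that closed edge.
Such edges carry no point of `D` in their interior, so by (1) they lie in `T` and form a forest
`S`. At a minimum vertex every edge outside `S` leaves with slope at least `1`, which together
with (2) gives `deg_S v ≥ 2 - [v = v₁] - [v = v₂]`: every minimum vertex lies on `S`, and `S`
has no leaves other than `v₁, v₂`. Every edge of a forest has a leaf on each side. An edge of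
`S` off the chain would thus have a leaf different from `v₁, v₂` on its far side; and the two
leaves on either side of any edge of `S` are `v₁` and `v₂`, so `S` joins `v₁` to `v₂`, which
forces each bridge of the chain into `S`.
-/

open Filter Topology Set

theorem Finset.card_le_sum_add_card_filter_mem {α : Type*} {A S : Finset α} {s : α → ℝ}
    (h : ∀ a ∈ A, 1 ≤ s a + if a ∈ S then 1 else 0) :
    (A.card : ℝ) ≤ ∑ a ∈ A, s a + (A.filter (· ∈ S)).card := by
  calc (A.card : ℝ) = ∑ a ∈ A, (1 : ℝ) := by simp
    _ ≤ ∑ a ∈ A, (s a + if a ∈ S then 1 else 0) := Finset.sum_le_sum h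
    _ = _ := by rw [Finset.sum_add_distrib, Finset.sum_boole]

section OneVariable

variable {g : ℝ → ℝ} {a b x s : ℝ}

theorem hasRightSlope_of_eq_affine {u : ℝ} (hxu : x < u)
    (hg : ∀ y ∈ Icc x u, g y = g x + s * (y - x)) : HasRightSlope g x s := by
  refine tendsto_const_nhds.congr' (eventuallyEq_of_mem (Ioo_mem_nhdsGT (sub_pos.2 hxu))
    fun h hh => ?_)
  rw [hg (x + h) ⟨by linarith [hh.1], by linarith [hh.2]⟩]
  field_simp [hh.1.ne']
  ring

theorem hasLeftSlope_of_eq_affine {u : ℝ} (hux : u < x)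
    (hg : ∀ y ∈ Icc u x, g y = g x + s * (x - y)) : HasLeftSlope g x s := by
  refine tendsto_const_nhds.congr' (eventuallyEq_of_mem (Ioo_mem_nhdsGT (sub_pos.2 hux))
    fun h hh => ?_)
  rw [hg (x - h) ⟨by linarith [hh.2], by linarith [hh.1]⟩]
  field_simp [hh.1.ne']
  ring

namespace PwIntAffineOn

theorem reflect (hg : PwIntAffineOn g a b) : PwIntAffineOn (fun x => g (a + b - x)) a b := by
  obtain ⟨n, t, s, c, h0, hn, hmono, haff⟩ := hg
  refine ⟨n, fun i => a + b - t i.rev, fun i => -s i.rev, fun i => c i.rev + s i.rev * (a + b),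
    by simp [hn], by simp [h0],
    fun i j hij => by simp only; linarith [hmono (Fin.rev_le_rev.2 hij)], fun i y hy => ?_⟩
  have hy' : a + b - y ∈ Icc (t i.rev.castSucc) (t i.rev.succ) := by
    rw [← Fin.rev_succ, ← Fin.rev_castSucc]
    constructor <;> linarith [hy.1, hy.2]
  simp only [haff _ _ hy']
  push_cast
  ring

theorem continuousOn (hg : PwIntAffineOn g a b) : ContinuousOn g (Icc a b) := by
  obtain ⟨n, t, s, c, rfl, rfl, hmono, haff⟩ := hg
  suffices ∀ k : Fin (n + 1), ContinuousOn g (Icc (t 0) (t k)) from this _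
  intro k
  induction k using Fin.induction with
  | zero => simp
  | succ k ih =>
    rw [← Icc_union_Icc_eq_Icc (hmono (Fin.zero_le _)) (hmono (Fin.castSucc_le_succ k))]
    refine ih.union_of_isClosed ?_ isClosed_Icc isClosed_Icc
    exact (continuous_const.mul continuous_id |>.add continuous_const).continuousOn.congr (haff k)

theorem exists_isMinOn (hg : PwIntAffineOn g a b) (hab : a ≤ b) :
    ∃ x ∈ Icc a b, IsMinOn g (Icc a b) x :=
  isCompact_Icc.exists_isMinOn (nonempty_Icc.2 hab) hg.continuousOn

theorem exists_affine_right (hg : PwIntAffineOn g a b) (hx : x ∈ Ico a b) :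
    ∃ (s : ℤ) (u : ℝ), x < u ∧ u ≤ b ∧ ∀ y ∈ Icc x u, g y = g x + s * (y - x) := by
  obtain ⟨n, t, s, c, h0, hn, hmono, haff⟩ := hg
  obtain ⟨j, hxj, hjmin⟩ := wellFounded_lt.has_min {j | x < t j}
    ⟨Fin.last n, by simpa [hn] using hx.2⟩
  have hj0 : j ≠ 0 := by
    rintro rfl
    exact absurd hx.1 (by simpa [h0] using hxj)
  obtain ⟨k, rfl⟩ := Fin.exists_succ_eq_of_ne_zero hj0
  have hkx : t k.castSucc ≤ x := not_lt.1 fun h => hjmin _ h Fin.castSucc_lt_succ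
  refine ⟨s k, t k.succ, hxj, hn ▸ hmono (Fin.le_last _), fun y hy => ?_⟩
  rw [haff k y ⟨hkx.trans hy.1, hy.2⟩, haff k x ⟨hkx, hxj.le⟩]
  ring

theorem exists_affine_left (hg : PwIntAffineOn g a b) (hx : x ∈ Ioc a b) :
    ∃ (s : ℤ) (u : ℝ), a ≤ u ∧ u < x ∧ ∀ y ∈ Icc u x, g y = g x + s * (x - y) := by
  obtain ⟨s, u, hxu, hub, hu⟩ :=
    hg.reflect.exists_affine_right (x := a + b - x) ⟨by linarith [hx.2], by linarith [hx.1]⟩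
  refine ⟨s, a + b - u, by linarith, by linarith, fun y hy => ?_⟩
  have := hu (a + b - y) ⟨by linarith [hy.2], by linarith [hy.1]⟩
  simp only [sub_sub_cancel] at this
  rw [this]
  ring

theorem exists_rightSlope_of_isMinOn (hg : PwIntAffineOn g a b) (hx : x ∈ Ico a b)
    (hmin : IsMinOn g (Icc a b) x) :
    ∃ s : ℤ, HasRightSlope g x s ∧ 0 ≤ s ∧
      (s = 0 → ∃ u ∈ Ioc x b, ∀ y ∈ Icc x u, g y = g x) := by
  obtain ⟨s, u, hxu, hub, hu⟩ := hg.exists_affine_right hx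
  refine ⟨s, hasRightSlope_of_eq_affine hxu hu, ?_, fun hs => ⟨u, ⟨hxu, hub⟩, fun y hy => ?_⟩⟩
  · have : g x ≤ g u := hmin ⟨by linarith [hx.1], hub⟩
    rw [hu u ⟨hxu.le, le_rfl⟩] at this
    exact_mod_cast (nonneg_of_mul_nonneg_left (by linarith) (sub_pos.2 hxu) : (0 : ℝ) ≤ s)
  · simp [hu y hy, hs]

theorem exists_leftSlope_of_isMinOn (hg : PwIntAffineOn g a b) (hx : x ∈ Ioc a b)
    (hmin : IsMinOn g (Icc a b) x) :
    ∃ s : ℤ, HasLeftSlope g x s ∧ 0 ≤ s ∧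
      (s = 0 → ∃ u ∈ Ico a x, ∀ y ∈ Icc u x, g y = g x) := by
  obtain ⟨s, u, hau, hux, hu⟩ := hg.exists_affine_left hx
  refine ⟨s, hasLeftSlope_of_eq_affine hux hu, ?_, fun hs => ⟨u, ⟨hau, hux⟩, fun y hy => ?_⟩⟩
  · have : g x ≤ g u := hmin ⟨hau, by linarith [hx.2]⟩
    rw [hu u ⟨le_rfl, hux.le⟩] at this
    exact_mod_cast (nonneg_of_mul_nonneg_left (by linarith) (sub_pos.2 hux) : (0 : ℝ) ≤ s)
  · simp [hu y hy, hs]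

/-- At an interior minimum, nonnegative outgoing slopes with nonpositive sum must both vanish. -/
theorem eventually_eq_of_isMinOn (hg : PwIntAffineOn g a b) (hx : x ∈ Ioo a b)
    (hmin : IsMinOn g (Icc a b) x)
    (hslope : ∃ sr sl, HasRightSlope g x sr ∧ HasLeftSlope g x sl ∧ sr + sl ≤ 0) :
    ∀ᶠ y in 𝓝 x, g y = g x := by
  obtain ⟨sr, sl, hsr, hsl, hsum⟩ := hslope
  obtain ⟨s, hs, hs0, hsu⟩ := hg.exists_rightSlope_of_isMinOn (Ioo_subset_Ico_self hx) hmin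
  obtain ⟨s', hs', hs'0, hs'u⟩ := hg.exists_leftSlope_of_isMinOn (Ioo_subset_Ioc_self hx) hmin
  rw [tendsto_nhds_unique hsr hs, tendsto_nhds_unique hsl hs'] at hsum
  have hs0' : (0 : ℝ) ≤ s := by exact_mod_cast hs0
  have hs'0' : (0 : ℝ) ≤ s' := by exact_mod_cast hs'0
  obtain ⟨u, hu, hgu⟩ := hsu (by exact_mod_cast (by linarith : (s : ℝ) = 0))
  obtain ⟨u', hu', hgu'⟩ := hs'u (by exact_mod_cast (by linarith : (s' : ℝ) = 0))
  filter_upwards [Ioo_mem_nhds hu'.2 hu.1] with y hy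
  rcases le_total y x with hyx | hxy
  exacts [hgu' y ⟨hy.1.le, hyx⟩, hgu y ⟨hxy, hy.2.le⟩]

/-- The minimum set is open in `(a, b)` by `eventually_eq_of_isMinOn` and closed by continuity,
so it is all of `(a, b)`, hence of `[a, b]`. -/
theorem eq_of_isMinOn (hg : PwIntAffineOn g a b) (hx : x ∈ Ioo a b)
    (hmin : IsMinOn g (Icc a b) x)
    (hslope : ∀ y ∈ Ioo a b, ∃ sr sl, HasRightSlope g y sr ∧ HasLeftSlope g y sl ∧ sr + sl ≤ 0) :
    ∀ y ∈ Icc a b, g y = g x := by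
  set A := Icc a b ∩ g ⁻¹' {g x}
  have hA : IsClosed A :=
    hg.continuousOn.preimage_isClosed_of_isClosed isClosed_Icc isClosed_singleton
  have hint : ∀ y ∈ Ioo a b, g y = g x → y ∈ interior A := by
    intro y hy hgy
    have hminy : IsMinOn g (Icc a b) y := fun z hz => hgy ▸ hmin hz
    rw [mem_interior_iff_mem_nhds]
    filter_upwards [Icc_mem_nhds hy.1 hy.2, hg.eventually_eq_of_isMinOn hy hminy (hslope y hy)]
      with z hz hgz
    exact ⟨hz, hgz.trans hgy⟩
  have hIoo : Ioo a b ⊆ interior A :=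
    isPreconnected_Ioo.subset_of_closure_inter_subset isOpen_interior ⟨x, hx, hint x hx rfl⟩
      fun y ⟨hyA, hy⟩ => hint y hy (closure_minimal interior_subset hA hyA).2
  intro y hy
  rw [← closure_Ioo (hx.1.trans hx.2).ne] at hy
  exact (closure_minimal (hIoo.trans interior_subset) hA hy).2

end PwIntAffineOn

end OneVariable

namespace LooplessMetricGraph

variable {G : LooplessMetricGraph}

section Reachability

variable {S A : Set G.E} {e : G.E} {u v w x z : G.V}

variable (G) in
def Joins (e : G.E) (v w : G.V) : Prop :=
  (G.src e = v ∧ G.dst e = w) ∨ (G.src e = w ∧ G.dst e = v)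

theorem joins_src_dst (e : G.E) : G.Joins e (G.src e) (G.dst e) := Or.inl ⟨rfl, rfl⟩

theorem Joins.symm (h : G.Joins e v w) : G.Joins e w v := Or.symm h

theorem Joins.incident (h : G.Joins e v w) : G.src e = v ∨ G.dst e = v := by
  rcases h with ⟨h, -⟩ | ⟨-, h⟩ <;> simp [h]

theorem Joins.src_ne_and_dst_ne (h : G.Joins e v w) (hv : u ≠ v) (hw : u ≠ w) :
    G.src e ≠ u ∧ G.dst e ≠ u := by
  rcases h with ⟨rfl, rfl⟩ | ⟨rfl, rfl⟩ <;> exact ⟨by tauto, by tauto⟩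

theorem exists_joins_of_incident (h : G.src e = v ∨ G.dst e = v) : ∃ w, G.Joins e v w := by
  rcases h with rfl | rfl
  exacts [⟨_, joins_src_dst e⟩, ⟨_, (joins_src_dst e).symm⟩]

theorem Joins.reaches (h : G.Joins e v w) (he : e ∈ S) : G.Reaches S v w :=
  .single ⟨e, he, h⟩

theorem Reaches.symm (h : G.Reaches S v w) : G.Reaches S w v := by
  induction h with
  | refl => exact .refl
  | tail _ hstep ih =>
    obtain ⟨e, he, hj⟩ := hstep
    exact Relation.ReflTransGen.head ⟨e, he, Joins.symm hj⟩ ih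

theorem Reaches.trans (h₁ : G.Reaches S u v) (h₂ : G.Reaches S v w) : G.Reaches S u w :=
  Relation.ReflTransGen.trans h₁ h₂

theorem Reaches.mono (hSA : S ⊆ A) (h : G.Reaches S v w) : G.Reaches A v w :=
  Relation.ReflTransGen.mono (fun _ _ ⟨e, he, h⟩ => ⟨e, hSA he, h⟩) v w h

theorem Joins.reaches_of_reaches (hvw : G.Joins e v w) (hxz : G.Joins e x z)
    (h : G.Reaches S v w) : G.Reaches S x z := by
  rcases hvw with ⟨rfl, rfl⟩ | ⟨rfl, rfl⟩ <;> rcases hxz with ⟨h1, h2⟩ | ⟨h1, h2⟩ <;>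
    simp only [← h1, ← h2] <;> first | exact h | exact h.symm

theorem SpanningConnected.diff_singleton (hA : G.SpanningConnected A) (hvw : G.Joins e v w)
    (h : G.Reaches (A \ {e}) v w) : G.SpanningConnected (A \ {e}) := by
  intro a b
  refine Relation.reflTransGen_closed (fun c d ⟨e', he', hcd⟩ => ?_) a b (hA a b)
  by_cases hee : e' = e
  · exact hvw.reaches_of_reaches (hee ▸ hcd) h
  · exact Joins.reaches hcd ⟨he', hee⟩

theorem IsSpanningTree.not_reaches {T : Set G.E} (hT : G.IsSpanningTree T) (he : e ∈ T)
    (hvw : G.Joins e v w) : ¬ G.Reaches (T \ {e}) v w :=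
  fun h => hT.2 e he (hT.1.diff_singleton hvw h)

theorem IsBridge.not_reaches (hconn : G.Connected) (he : G.IsBridge e) (hvw : G.Joins e v w) :
    ¬ G.Reaches (univ \ {e}) v w :=
  fun h => he (SpanningConnected.diff_singleton hconn hvw h)

theorem IsBridge.mem_of_isSpanningTree {T : Set G.E} (he : G.IsBridge e)
    (hT : G.IsSpanningTree T) : e ∈ T :=
  by_contra fun heT => he fun v w =>
    (hT.1 v w).mono fun _ he' => ⟨trivial, fun h => heT (h ▸ he')⟩

theorem Connected.exists_incident [Nonempty G.E] (hconn : G.Connected) (v : G.V) :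
    ∃ e, G.src e = v ∨ G.dst e = v := by
  obtain ⟨e₀⟩ := ‹Nonempty G.E›
  obtain ⟨w, hw⟩ : ∃ w, w ≠ v := by
    by_cases h : G.src e₀ = v
    exacts [⟨G.dst e₀, fun h' => G.no_loops e₀ (h.trans h'.symm)⟩, ⟨_, h⟩]
  obtain h | ⟨c, ⟨e, -, hvc⟩, -⟩ := Relation.ReflTransGen.cases_head (hconn v w)
  exacts [absurd h.symm hw, ⟨e, Joins.incident hvc⟩]

end Reachability

section Degree

variable {S : Finset G.E} {e : G.E} {v z : G.V}

variable (G) in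
def degree (S : Finset G.E) (v : G.V) : ℕ :=
  (S.filter fun e => G.src e = v).card + (S.filter fun e => G.dst e = v).card

theorem degree_eq_card_filter (S : Finset G.E) (v : G.V) :
    G.degree S v = (S.filter fun e => G.src e = v ∨ G.dst e = v).card := by
  rw [Finset.filter_or, Finset.card_union_of_disjoint]
  · rfl
  · exact Finset.disjoint_filter.2 fun e _ h1 h2 => G.no_loops e (h1.trans h2.symm)

theorem degree_ne_zero_iff : G.degree S v ≠ 0 ↔ ∃ e ∈ S, G.src e = v ∨ G.dst e = v := by
  rw [degree_eq_card_filter, Ne, Finset.card_eq_zero, ← ne_eq, ← Finset.nonempty_iff_ne_empty,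
    Finset.filter_nonempty_iff]

theorem exists_ne_of_degree_ne_one (he : e ∈ S) (hv : G.src e = v ∨ G.dst e = v)
    (h : G.degree S v ≠ 1) : ∃ e' ∈ S, e' ≠ e ∧ (G.src e' = v ∨ G.dst e' = v) := by
  by_contra! h'
  refine h ((degree_eq_card_filter S v).trans (Finset.card_eq_one.2 ⟨e, ?_⟩))
  ext e'
  simp only [Finset.mem_filter, Finset.mem_singleton]
  refine ⟨fun ⟨he', hv'⟩ => by_contra fun hne => ?_, fun h => h ▸ ⟨he, hv⟩⟩
  rcases hv' with hv' | hv'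
  exacts [(h' e' he' hne).1 hv', (h' e' he' hne).2 hv']

theorem degree_erase (hsrc : G.src e ≠ v) (hdst : G.dst e ≠ v) :
    G.degree (S.erase e) v = G.degree S v := by
  rw [degree_eq_card_filter, degree_eq_card_filter, Finset.filter_erase,
    Finset.erase_eq_of_notMem (by simp [hsrc, hdst])]

variable (G) in
def component (S : Finset G.E) (z : G.V) : Finset G.E :=
  S.filter fun e => G.Reaches ↑S z (G.src e)

theorem component_subset (S : Finset G.E) (z : G.V) : G.component S z ⊆ S :=
  Finset.filter_subset _ _

theorem mem_component (he : e ∈ S) (hv : G.src e = v ∨ G.dst e = v)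
    (hzv : G.Reaches ↑S z v) : e ∈ G.component S z := by
  refine Finset.mem_filter.2 ⟨he, ?_⟩
  rcases hv with rfl | rfl
  exacts [hzv, hzv.trans ((joins_src_dst e).symm.reaches he)]

theorem degree_component (hzv : G.Reaches ↑S z v) :
    G.degree (G.component S z) v = G.degree S v := by
  rw [degree_eq_card_filter, degree_eq_card_filter, component, Finset.filter_filter]
  exact congrArg _ (Finset.filter_congr fun e he =>
    ⟨And.right, fun hv => ⟨(Finset.mem_filter.1 (mem_component he hv hzv)).2, hv⟩⟩)

end Degree

section Forest

variable {T : Set G.E} {S : Finset G.E}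

theorem IsSpanningTree.exists_degree_eq_one (hT : G.IsSpanningTree T) (hST : ↑S ⊆ T)
    {e : G.E} (he : e ∈ S) {x z : G.V} (hxz : G.Joins e x z) :
    ∃ v, G.degree S v = 1 ∧ G.Reaches (↑S \ {e}) z v := by
  induction S using Finset.strongInduction generalizing e x z with
  | H S ih =>
  by_cases hz : G.degree S z = 1
  · exact ⟨z, hz, .refl⟩
  -- otherwise recurse into the component of `z` in `S \ {e}`, entered through a second edge `e₁`
  obtain ⟨e₁, he₁, he₁e, hz₁⟩ := exists_ne_of_degree_ne_one he hxz.symm.incident hz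
  obtain ⟨z₁, hzz₁⟩ := exists_joins_of_incident hz₁
  have he₁S : e₁ ∈ S.erase e := Finset.mem_erase.2 ⟨he₁e, he₁⟩
  have hSe : (↑(S.erase e) : Set G.E) ⊆ T \ {e} := by
    rw [Finset.coe_erase]
    exact Set.sdiff_subset_sdiff_left hST
  set S' := G.component (S.erase e) z
  have hS'S : S' ⊂ S := (component_subset _ _).trans_ssubset (Finset.erase_ssubset he)
  have hS'T : ↑S' ⊆ T := fun e' he' => hST (hS'S.subset he')
  obtain ⟨v, hv, hz₁v⟩ := ih S' hS'S hS'T (mem_component he₁S hz₁ .refl) hzz₁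
  have hzv : G.Reaches ↑(S.erase e) z v :=
    (hzz₁.reaches he₁S).trans (hz₁v.mono (Set.sdiff_subset.trans (component_subset _ _)))
  have hvx : v ≠ x := by
    rintro rfl
    exact hT.not_reaches (hST he) hxz.symm (hzv.mono hSe)
  have hvz : v ≠ z := by
    rintro rfl
    exact hT.not_reaches (hST he₁) hzz₁.symm (hz₁v.mono (Set.sdiff_subset_sdiff_left hS'T))
  obtain ⟨hsrc, hdst⟩ := hxz.src_ne_and_dst_ne hvx hvz
  refine ⟨v, ?_, Finset.coe_erase e S ▸ hzv⟩
  rw [← degree_erase hsrc hdst, ← degree_component hzv]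
  exact hv

namespace BridgeChain

variable (B : G.BridgeChain)

theorem reaches {A : Set G.E} {j k : Fin (B.n + 1)} (hjk : j ≤ k)
    (hA : ∀ l : Fin B.n, j ≤ l.castSucc → l.succ ≤ k → B.b l ∈ A) :
    G.Reaches A (B.w j) (B.w k) := by
  induction k using Fin.induction with
  | zero =>
    rw [Fin.le_zero_iff.1 hjk]
    exact .refl
  | succ l ih =>
    rcases eq_or_lt_of_le hjk with rfl | hlt
    · exact .refl
    have hjl := Fin.le_castSucc_iff.2 hlt
    exact (ih hjl fun l' h1 h2 => hA l' h1 (h2.trans (Fin.castSucc_le_succ l))).trans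
      (Joins.reaches (B.joins l) (hA l hjl le_rfl))

theorem subset_range (hT : G.IsSpanningTree T) (hST : ↑S ⊆ T)
    (hdeg : ∀ v, v ≠ B.w 0 → v ≠ B.w (Fin.last B.n) → G.degree S v ≠ 1) :
    ↑S ⊆ range B.b := by
  intro e heS
  by_contra heB
  have hchain : G.Reaches (T \ {e}) (B.w 0) (B.w (Fin.last B.n)) :=
    B.reaches (Fin.zero_le _) fun l _ _ =>
      ⟨(B.bridges l).mem_of_isSpanningTree hT, fun h => heB ⟨l, h⟩⟩
  obtain ⟨x, z, hxz, hz⟩ : ∃ x z, G.Joins e x z ∧ ¬ G.Reaches (T \ {e}) (B.w 0) z := by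
    by_cases h : G.Reaches (T \ {e}) (B.w 0) (G.dst e)
    · exact ⟨_, _, (joins_src_dst e).symm,
        fun h' => hT.not_reaches (hST heS) (joins_src_dst e) (h'.symm.trans h)⟩
    · exact ⟨_, _, joins_src_dst e, h⟩
  obtain ⟨v, hv, hzv⟩ := hT.exists_degree_eq_one hST heS hxz
  have hzv' := hzv.mono (Set.sdiff_subset_sdiff_left hST)
  refine hdeg v ?_ ?_ hv
  · rintro rfl
    exact hz hzv'.symm
  · rintro rfl
    exact hz (hchain.trans hzv'.symm)

theorem range_subset (hconn : G.Connected) (hT : G.IsSpanningTree T) (hST : ↑S ⊆ T)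
    (hS : S.Nonempty) (hdeg : ∀ v, v ≠ B.w 0 → v ≠ B.w (Fin.last B.n) → G.degree S v ≠ 1) :
    range B.b ⊆ ↑S := by
  obtain ⟨e, he⟩ := hS
  -- the two leaves on either side of `e` must be the two ends of the chain
  have hleaf : ∀ v, G.degree S v = 1 → v = B.w 0 ∨ v = B.w (Fin.last B.n) := fun v hv => by
    by_contra! h
    exact hdeg v h.1 h.2 hv
  obtain ⟨v, hv, hv'⟩ := hT.exists_degree_eq_one hST he (joins_src_dst e)
  obtain ⟨v', hw, hw'⟩ := hT.exists_degree_eq_one hST he (joins_src_dst e).symm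
  have hSe : (↑S \ {e} : Set G.E) ⊆ ↑S := Set.sdiff_subset
  have hvv' : G.Reaches ↑S v' v :=
    ((hw'.mono hSe).symm.trans ((joins_src_dst e).reaches he)).trans (hv'.mono hSe)
  have hne : v ≠ v' := by
    rintro rfl
    exact hT.not_reaches (hST he) (joins_src_dst e)
      ((hw'.trans hv'.symm).mono (Set.sdiff_subset_sdiff_left hST))
  have hends : G.Reaches ↑S (B.w 0) (B.w (Fin.last B.n)) := by
    rcases hleaf v hv with rfl | rfl <;> rcases hleaf v' hw with rfl | rfl
    exacts [absurd rfl hne, hvv'.symm, hvv', absurd rfl hne]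
  rintro _ ⟨i, rfl⟩
  by_contra hi
  refine (B.bridges i).not_reaches hconn (B.joins i : G.Joins _ _ _) ?_
  have hA : ∀ l, l ≠ i → B.b l ∈ (univ \ {B.b i} : Set G.E) :=
    fun l hl => ⟨trivial, B.b_inj.ne hl⟩
  refine ((B.reaches (Fin.zero_le _) fun l _ h => hA l ?_).symm.trans
    (hends.mono fun e he => ⟨trivial, fun h => hi (h ▸ he)⟩)).trans
    (B.reaches (Fin.le_last _) fun l h _ => hA l ?_).symm
  · rintro rfl
    exact absurd h (not_le.2 Fin.castSucc_lt_succ)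
  · rintro rfl
    exact absurd h (not_le.2 Fin.castSucc_lt_succ)

end BridgeChain

end Forest

section MinimumLocus

variable {f : G.Point → ℝ} {e : G.E} {t μ s : ℝ} {D : G.Point → ℤ} {v : G.V}

theorem edgeFun_zero (f : G.Point → ℝ) (e : G.E) :
    G.edgeFun f e 0 = f (.inl (G.src e)) := by
  simp [edgeFun]

theorem edgeFun_len (f : G.Point → ℝ) (e : G.E) :
    G.edgeFun f e (G.len e) = f (.inl (G.dst e)) := by
  simp [edgeFun, (G.len_pos e).not_ge]

theorem edgeFun_of_mem_Ioo (f : G.Point → ℝ) (h : 0 < t ∧ t < G.len e) :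
    G.edgeFun f e t = f (.inr ⟨e, t, h⟩) :=
  dif_pos h

theorem edgeFun_mem_range (f : G.Point → ℝ) (e : G.E) (t : ℝ) : G.edgeFun f e t ∈ range f := by
  unfold edgeFun
  split_ifs <;> exact ⟨_, rfl⟩

theorem exists_edgeFun_eq [Nonempty G.E] (f : G.Point → ℝ) (hconn : G.Connected)
    (p : G.Point) : ∃ e, ∃ t ∈ Icc 0 (G.len e), G.edgeFun f e t = f p := by
  rcases p with v | ⟨e, t, ht⟩
  · obtain ⟨e, rfl | rfl⟩ := hconn.exists_incident v
    exacts [⟨e, 0, ⟨le_rfl, (G.len_pos e).le⟩, edgeFun_zero f e⟩,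
      ⟨e, G.len e, ⟨(G.len_pos e).le, le_rfl⟩, edgeFun_len f e⟩]
  · exact ⟨e, t, ⟨ht.1.le, ht.2.le⟩, edgeFun_of_mem_Ioo f ht⟩

theorem IsTropicalRational.exists_isMin [Nonempty G.E] (hf : G.IsTropicalRational f)
    (hconn : G.Connected) : ∃ p, ∀ q, f p ≤ f q := by
  choose x hx hmin using fun e => (hf e).exists_isMinOn (G.len_pos e).le
  obtain ⟨e₀, he₀⟩ := Finite.exists_min fun e => G.edgeFun f e (x e)
  obtain ⟨p, hp⟩ := edgeFun_mem_range f e₀ (x e₀)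
  refine ⟨p, fun q => ?_⟩
  obtain ⟨e, t, ht, hq⟩ := exists_edgeFun_eq f hconn q
  rw [hp, ← hq]
  exact (he₀ e).trans (hmin e ht)

theorem isMinOn_edgeFun (hlow : ∀ q, μ ≤ f q) (ht : G.edgeFun f e t = μ) :
    IsMinOn (G.edgeFun f e) (Icc 0 (G.len e)) t := fun s _ => by
  obtain ⟨p, hp⟩ := edgeFun_mem_range f e s
  simpa [ht, ← hp] using hlow p

variable (f) in
def minEdges (μ : ℝ) : Finset G.E :=
  Finset.univ.filter fun e => ∃ t h, f (.inr ⟨e, t, h⟩) = μ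

theorem mem_minEdges_of_edgeFun_eq (ht : t ∈ Ioo 0 (G.len e)) (h : G.edgeFun f e t = μ) :
    e ∈ minEdges f μ :=
  Finset.mem_filter.2 ⟨Finset.mem_univ _, t, ht, edgeFun_of_mem_Ioo f ht ▸ h⟩

theorem HasDivisor.slope_sum_nonpos (hf : G.HasDivisor f D) (hD : ∀ q, 0 ≤ D (.inr q))
    (ht : t ∈ Ioo 0 (G.len e)) : ∃ sr sl, HasRightSlope (G.edgeFun f e) t sr ∧
      HasLeftSlope (G.edgeFun f e) t sl ∧ sr + sl ≤ 0 := by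
  obtain ⟨sr, sl, hsr, hsl, hsum⟩ := hf.2 (.inr ⟨e, t, ht⟩)
  exact ⟨sr, sl, hsr, hsl, hsum ▸ neg_nonpos.2 (Int.cast_nonneg (hD _))⟩

theorem HasDivisor.edgeFun_eq_of_mem_minEdges (hf : G.HasDivisor f D)
    (hD : ∀ q, 0 ≤ D (.inr q)) (hlow : ∀ q, μ ≤ f q) (he : e ∈ minEdges f μ) :
    ∀ t ∈ Icc 0 (G.len e), G.edgeFun f e t = μ := by
  obtain ⟨t₀, ht₀, hft₀⟩ := (Finset.mem_filter.1 he).2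
  rw [← edgeFun_of_mem_Ioo f ht₀] at hft₀
  intro t ht
  rw [← hft₀]
  exact (hf.1 e).eq_of_isMinOn ht₀ (isMinOn_edgeFun hlow hft₀)
    (fun y hy => hf.slope_sum_nonpos hD hy) t ht

theorem HasDivisor.eq_of_mem_onEdge (hf : G.HasDivisor f D) (hD : ∀ q, 0 ≤ D (.inr q))
    (hlow : ∀ q, μ ≤ f q) (he : e ∈ minEdges f μ) : ∀ p ∈ G.onEdge e, f p = μ := by
  have hconst := hf.edgeFun_eq_of_mem_minEdges hD hlow he
  rintro p (rfl | rfl | ⟨⟨t, ht⟩, rfl⟩)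
  · rw [← edgeFun_zero f, hconst 0 ⟨le_rfl, (G.len_pos e).le⟩]
  · rw [← edgeFun_len f, hconst _ ⟨(G.len_pos e).le, le_rfl⟩]
  · rw [← edgeFun_of_mem_Ioo f ht, hconst t ⟨ht.1.le, ht.2.le⟩]

theorem HasDivisor.eq_zero_of_mem_minEdges (hf : G.HasDivisor f D)
    (hD : ∀ q, 0 ≤ D (.inr q)) (hlow : ∀ q, μ ≤ f q) (he : e ∈ minEdges f μ)
    (ht : 0 < t ∧ t < G.len e) : D (.inr ⟨e, t, ht⟩) = 0 := by
  have hconst := hf.edgeFun_eq_of_mem_minEdges hD hlow he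
  have hflat : ∀ y ∈ Icc 0 (G.len e), G.edgeFun f e y = G.edgeFun f e t :=
    fun y hy => (hconst y hy).trans (hconst t ⟨ht.1.le, ht.2.le⟩).symm
  have hr : HasRightSlope (G.edgeFun f e) t 0 :=
    hasRightSlope_of_eq_affine ht.2 fun y hy => by simp [hflat y ⟨ht.1.le.trans hy.1, hy.2⟩]
  have hl : HasLeftSlope (G.edgeFun f e) t 0 :=
    hasLeftSlope_of_eq_affine ht.1 fun y hy => by simp [hflat y ⟨hy.1, hy.2.trans ht.2.le⟩]
  obtain ⟨sr, sl, hsr, hsl, hsum⟩ := hf.2 (.inr ⟨e, t, ht⟩)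
  rw [tendsto_nhds_unique hsr hr, tendsto_nhds_unique hsl hl] at hsum
  exact_mod_cast (neg_eq_zero.1 (by linarith : -(D (.inr ⟨e, t, ht⟩) : ℝ) = 0))

theorem IsTropicalRational.one_le_rightSlope_add (hf : G.IsTropicalRational f)
    (hlow : ∀ q, μ ≤ f q) (hv : f (.inl (G.src e)) = μ)
    (hs : HasRightSlope (G.edgeFun f e) 0 s) : 1 ≤ s + if e ∈ minEdges f μ then 1 else 0 := by
  have h0 : G.edgeFun f e 0 = μ := by rw [edgeFun_zero, hv]
  obtain ⟨s', hs', hs'0, hflat⟩ := (hf e).exists_rightSlope_of_isMinOn ⟨le_rfl, G.len_pos e⟩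
    (isMinOn_edgeFun hlow h0)
  rw [tendsto_nhds_unique hs hs']
  split_ifs with he
  · have : (0 : ℝ) ≤ s' := by exact_mod_cast hs'0
    linarith
  · have : s' ≠ 0 := by
      rintro rfl
      obtain ⟨u, hu, hconst⟩ := hflat rfl
      exact he (mem_minEdges_of_edgeFun_eq ⟨half_pos hu.1, by linarith [hu.1, hu.2]⟩
        ((hconst _ ⟨(half_pos hu.1).le, by linarith [hu.1]⟩).trans h0))
    have : (1 : ℤ) ≤ s' := by omega
    simpa using (Int.cast_le (R := ℝ)).2 this

theorem IsTropicalRational.one_le_leftSlope_add (hf : G.IsTropicalRational f)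
    (hlow : ∀ q, μ ≤ f q) (hv : f (.inl (G.dst e)) = μ)
    (hs : HasLeftSlope (G.edgeFun f e) (G.len e) s) :
    1 ≤ s + if e ∈ minEdges f μ then 1 else 0 := by
  have hL : G.edgeFun f e (G.len e) = μ := by rw [edgeFun_len, hv]
  obtain ⟨s', hs', hs'0, hflat⟩ := (hf e).exists_leftSlope_of_isMinOn ⟨G.len_pos e, le_rfl⟩
    (isMinOn_edgeFun hlow hL)
  rw [tendsto_nhds_unique hs hs']
  split_ifs with he
  · have : (0 : ℝ) ≤ s' := by exact_mod_cast hs'0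
    linarith
  · have : s' ≠ 0 := by
      rintro rfl
      obtain ⟨u, hu, hconst⟩ := hflat rfl
      exact he (mem_minEdges_of_edgeFun_eq (t := (u + G.len e) / 2)
        ⟨by linarith [hu.1, hu.2], by linarith [hu.2]⟩
        ((hconst _ ⟨by linarith [hu.2], by linarith [hu.2]⟩).trans hL))
    have : (1 : ℤ) ≤ s' := by omega
    simpa using (Int.cast_le (R := ℝ)).2 this

/-- At a minimum vertex, each edge not in `minEdges` leaves with slope at least `1`. -/
theorem HasDivisor.valAt_le (hf : G.HasDivisor f D) (hlow : ∀ q, μ ≤ f q)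
    (hv : f (.inl v) = μ) : (G.valAt v : ℤ) ≤ G.degree (minEdges f μ) v - D (.inl v) := by
  obtain ⟨sOut, sIn, hOut, hIn, hsum⟩ := hf.2 (.inl v)
  have hsrc := Finset.card_le_sum_add_card_filter_mem (S := minEdges f μ) (s := sOut)
    (A := Finset.univ.filter fun e => G.src e = v) fun e he =>
    have he := (Finset.mem_filter.1 he).2
    hf.1.one_le_rightSlope_add hlow (he ▸ hv) (hOut e he)
  have hdst := Finset.card_le_sum_add_card_filter_mem (S := minEdges f μ) (s := sIn)
    (A := Finset.univ.filter fun e => G.dst e = v) fun e he =>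
    have he := (Finset.mem_filter.1 he).2
    hf.1.one_le_leftSlope_add hlow (he ▸ hv) (hIn e he)
  have hfilter : ∀ p : G.E → Prop, (Finset.univ.filter p).filter (· ∈ minEdges f μ) =
      (minEdges f μ).filter p := fun p => by ext; simp [and_comm]
  rw [hfilter] at hsrc hdst
  have : (G.valAt v : ℝ) ≤ G.degree (minEdges f μ) v - D (.inl v) := by
    simp only [valAt, degree, Nat.cast_add]
    linarith
  exact_mod_cast this

theorem HasDivisor.setOf_eq_iUnion_onEdge (hf : G.HasDivisor f D)
    (hD : ∀ q, 0 ≤ D (.inr q)) (hlow : ∀ q, μ ≤ f q)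
    (hdeg : ∀ v, f (.inl v) = μ → G.degree (minEdges f μ) v ≠ 0) :
    {p | f p = μ} = ⋃ e ∈ minEdges f μ, G.onEdge e := by
  ext p
  simp only [mem_iUnion, exists_prop]
  refine ⟨fun hp => ?_, fun ⟨e, he, hp⟩ => hf.eq_of_mem_onEdge hD hlow he p hp⟩
  rcases p with v | ⟨e, t, ht⟩
  · obtain ⟨e, he, rfl | rfl⟩ := degree_ne_zero_iff.1 (hdeg v hp)
    exacts [⟨e, he, Or.inl rfl⟩, ⟨e, he, Or.inr (Or.inl rfl)⟩]
  · exact ⟨e, mem_minEdges_of_edgeFun_eq ht (by rw [edgeFun_of_mem_Ioo f ht, hp]),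
      Or.inr (Or.inr ⟨_, rfl⟩)⟩

end MinimumLocus

section CanonicalBound

variable {f : G.Point → ℝ} {μ : ℝ} {D : G.Point → ℤ} {v v₁ v₂ : G.V}

theorem HasDivisor.two_le_degree_add {k₁ k₂ : ℤ}
    (hf : G.HasDivisor f fun p => D p - 2 * G.canonical p) (hlow : ∀ q, μ ≤ f q)
    (hv : f (.inl v) = μ) (hDv : G.canonical (.inl v) - k₁ - k₂ ≤ D (.inl v)) :
    2 ≤ (G.degree (minEdges f μ) v : ℤ) + k₁ + k₂ := by
  have := hf.valAt_le hlow hv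
  simp only [canonical] at this hDv
  omega

theorem HasDivisor.degree_minEdges_ne_zero
    (hf : G.HasDivisor f fun p => D p - 2 * G.canonical p) (hlow : ∀ q, μ ≤ f q)
    (hDge : ∀ v, G.canonical (.inl v) - (if v = v₁ then 1 else 0) -
      (if v = v₂ then 1 else 0) ≤ D (.inl v))
    (h₁₂ : v₁ ≠ v₂) (hv : f (.inl v) = μ) : G.degree (minEdges f μ) v ≠ 0 := by
  have := hf.two_le_degree_add hlow hv (hDge v)
  split_ifs at this with h1 h2
  · exact absurd (h1 ▸ h2) h₁₂
  all_goals omega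

theorem HasDivisor.degree_minEdges_ne_one
    (hf : G.HasDivisor f fun p => D p - 2 * G.canonical p) (hlow : ∀ q, μ ≤ f q)
    (hD : ∀ q, 0 ≤ D (.inr q) - 2 * G.canonical (.inr q))
    (hDge : ∀ v, G.canonical (.inl v) - (if v = v₁ then 1 else 0) -
      (if v = v₂ then 1 else 0) ≤ D (.inl v))
    (h1 : v ≠ v₁) (h2 : v ≠ v₂) : G.degree (minEdges f μ) v ≠ 1 := by
  intro hv
  obtain ⟨e, he, hev⟩ := degree_ne_zero_iff.1 (hv ▸ one_ne_zero)
  have hfv : f (.inl v) = μ := hf.eq_of_mem_onEdge hD hlow he _ (by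
    rcases hev with rfl | rfl
    exacts [Or.inl rfl, Or.inr (Or.inl rfl)])
  have := hf.two_le_degree_add hlow hfv (hDge v)
  simp only [h1, h2, if_false] at this
  omega

end CanonicalBound

end LooplessMetricGraph

open LooplessMetricGraph

theorem statement_18_general (G : LooplessMetricGraph) (hconn : G.Connected)
    (B : G.BridgeChain)
    (T : Set G.E) (hT : G.IsSpanningTree T)
    (D : G.Point → ℤ)
    (hDeff : ∀ p, 0 ≤ D p)
    (hDsupp : ∀ e' : G.E, e' ∉ T →
      ∃ t : {t : ℝ // 0 < t ∧ t < G.len e'}, D (Sum.inr ⟨e', t⟩) ≠ 0)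
    (hDge : ∀ p : G.Point,
      G.canonical p - (if p = Sum.inl (B.w 0) then 1 else 0) -
        (if p = Sum.inl (B.w (Fin.last B.n)) then 1 else 0) ≤ D p)
    (f : G.Point → ℝ)
    (hf : G.HasDivisor f (fun p => D p - 2 * G.canonical p)) :
    {p | ∀ q, f p ≤ f q} = B.points := by
  have : Nonempty G.E := ⟨B.b ⟨0, B.n_pos⟩⟩
  obtain ⟨p₀, hp₀⟩ := hf.1.exists_isMin hconn
  set μ := f p₀
  have hD : ∀ q, 0 ≤ D (.inr q) - 2 * G.canonical (.inr q) := fun q => by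
    simpa [canonical] using hDeff _
  have hST : ↑(minEdges f μ) ⊆ T := fun e he => by_contra fun heT => by
    obtain ⟨⟨t, ht⟩, hDt⟩ := hDsupp e heT
    simpa [canonical, hDt] using hf.eq_zero_of_mem_minEdges hD hp₀ he ht
  have hDge' : ∀ v, G.canonical (.inl v) - (if v = B.w 0 then 1 else 0) -
      (if v = B.w (Fin.last B.n) then 1 else 0) ≤ D (.inl v) := fun v => by
    simpa only [Sum.inl.injEq] using hDge (.inl v)
  have hleaf := fun v => hf.degree_minEdges_ne_one hp₀ hD hDge' (v := v)
  have hlocus := hf.setOf_eq_iUnion_onEdge hD hp₀ fun v =>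
    hf.degree_minEdges_ne_zero hp₀ hDge' (B.w_inj.ne (by simp [Fin.ext_iff, B.n_pos.ne]))
  obtain ⟨e, he, -⟩ := mem_iUnion₂.1 (hlocus.subset (rfl : f p₀ = μ))
  have hSB : ↑(minEdges f μ) = range B.b :=
    (B.subset_range hT hST hleaf).antisymm (B.range_subset hconn hT hST ⟨e, he⟩ hleaf)
  have hmin : {p | ∀ q, f p ≤ f q} = {p | f p = μ} :=
    Set.ext fun p => ⟨fun hp => le_antisymm (hp p₀) (hp₀ p), fun hp q => hp ▸ hp₀ q⟩
  rw [hmin, hlocus, BridgeChain.points, ← Set.biUnion_range, ← hSB, Finset.set_biUnion_coe]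

/-- **Lemma 3.25.**  Let `G` be a finite connected discrete graph without
loops and without `1`-valent vertices, let `Γ` be its associated metric
graph, let `B` be a maximal chain of bridge edges in `Γ` with endpoints
`v₁, v₂`, and let `T` be a spanning tree of `Γ`.  Let `D` be an effective
divisor on `Γ` equivalent to `2K_G` such that (1) the support of `D` contains
a point from the relative interior of each edge contained in the complement
of `T`, and (2) `D ≥ K_G − (v₁) − (v₂)`.  If `f` is a tropical rational
function on `Γ` with `div(f) = D − 2K_G`, then the locus of points of `Γ`
where `f` achieves its minimum value is equal to `B`. -/
theorem statement_18 (G : LooplessMetricGraph) (hconn : G.Connected)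
    (hval : ∀ v : G.V, G.valAt v ≠ 1)
    (B : G.BridgeChain) (hB : B.IsMaximal)
    (T : Set G.E) (hT : G.IsSpanningTree T)
    (D : G.Point → ℤ) (hDfin : (Function.support D).Finite)
    (hDeff : ∀ p, 0 ≤ D p)
    (hDsupp : ∀ e' : G.E, e' ∉ T →
      ∃ t : {t : ℝ // 0 < t ∧ t < G.len e'}, D (Sum.inr ⟨e', t⟩) ≠ 0)
    (hDge : ∀ p : G.Point,
      G.canonical p - (if p = Sum.inl (B.w 0) then 1 else 0) -
        (if p = Sum.inl (B.w (Fin.last B.n)) then 1 else 0) ≤ D p)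
    (f : G.Point → ℝ)
    (hf : G.HasDivisor f (fun p => D p - 2 * G.canonical p)) :
    {p | ∀ q, f p ≤ f q} = B.points :=
  statement_18_general G hconn B T hT D hDeff hDsupp hDge f hf
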